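/- Fix N ≥ 1 and let θ_0, ..., θ_N be the OGM step-size sequence and h the OGM coefficients. Then the double sum satisfies sum_{j=1}^{i} sum_{k=0}^{j-1} h_{j,k} = θ_i^2 - 1 for i = 1,...,N-1, and sum_{j=1}^{N} sum_{k=0}^{j-1} h_{j,k} = (θ_N^2 - 1)/2. -/

import Mathlib

noncomputable def tseq : ℕ → ℝ
  | 0 => 1
  | i + 1 => (1 + Real.sqrt (1 + 4 * (tseq i) ^ 2)) / 2

noncomputable def θseq (N i : ℕ) : ℝ :=
  if i < N then tseq i else (1 + Real.sqrt (1 + 8 * (tseq (N - 1)) ^ 2)) / 2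

/-!
Write `S_i = ∑_{j=1}^{i} ∑_{k<j} h_{j,k}`. Exchanging the order of summation in the recursion
for `h_{i+1,k}` expresses the `(i+1)`-st row sum through `S_i` and `∑_{k<i} θ_k = θ_i² - θ_i`;
if `S_i = θ_i² - 1` this row sum is `1 + θ_i² / θ_{i+1}`. For `i + 1 < N` the relation
`θ_{i+1}² - θ_{i+1} = θ_i²` turns `S_{i+1} = θ_i² (1 + 1/θ_{i+1})` into `θ_{i+1}² - 1`; for the
last step `θ_N² - θ_N = 2 θ_{N-1}²` turns it into `(θ_N² - 1) / 2`.
-/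

lemma tseq_pos (i : ℕ) : 0 < tseq i := by
  cases i with
  | zero => norm_num [tseq]
  | succ i => rw [tseq]; positivity

lemma θseq_pos (N i : ℕ) : 0 < θseq N i := by
  unfold θseq
  split
  · exact tseq_pos i
  · positivity

lemma θseq_of_lt {N i : ℕ} (h : i < N) : θseq N i = tseq i := if_pos h

lemma tseq_succ_sq_sub (i : ℕ) : tseq (i + 1) ^ 2 - tseq (i + 1) = tseq i ^ 2 := by
  have hsqrt := Real.sq_sqrt (show (0 : ℝ) ≤ 1 + 4 * tseq i ^ 2 by positivity)
  rw [tseq]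
  linear_combination hsqrt / 4

lemma θseq_self_sq_sub (N : ℕ) : θseq N N ^ 2 - θseq N N = 2 * tseq (N - 1) ^ 2 := by
  have hsqrt := Real.sq_sqrt (show (0 : ℝ) ≤ 1 + 8 * tseq (N - 1) ^ 2 by positivity)
  rw [θseq, if_neg (lt_irrefl N)]
  linear_combination hsqrt / 4

lemma sum_range_tseq (i : ℕ) : ∑ k ∈ Finset.range i, tseq k = tseq i ^ 2 - tseq i := by
  induction i with
  | zero => norm_num [tseq]
  | succ i ih => rw [Finset.sum_range_succ, ih, tseq_succ_sq_sub]; ring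

lemma sum_range_sum_Ico_comm {M : Type*} [AddCommMonoid M] (f : ℕ → ℕ → M) (i : ℕ) :
    ∑ k ∈ Finset.range i, ∑ j ∈ Finset.Ico (k + 1) (i + 1), f j k =
      ∑ j ∈ Finset.Icc 1 i, ∑ k ∈ Finset.range j, f j k := by
  refine Finset.sum_comm' fun k j => ?_
  simp only [Finset.mem_range, Finset.mem_Ico, Finset.mem_Icc]
  omega

section OGM

variable {N : ℕ} {h : ℕ → ℕ → ℝ}
  (hO2a : ∀ i k, k < i → i + 1 ≤ N →
    h (i + 1) k = (1 / θseq N (i + 1)) *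
      (2 * θseq N k - ∑ j ∈ Finset.Ico (k + 1) (i + 1), h j k))
  (hO2b : ∀ i, i + 1 ≤ N → h (i + 1) i = 1 + (2 * θseq N i - 1) / θseq N (i + 1))

include hO2a hO2b

lemma sum_range_ogm_succ {i : ℕ} (hiN : i + 1 ≤ N)
    (hS : ∑ j ∈ Finset.Icc 1 i, ∑ k ∈ Finset.range j, h j k = tseq i ^ 2 - 1) :
    ∑ k ∈ Finset.range (i + 1), h (i + 1) k = 1 + tseq i ^ 2 / θseq N (i + 1) := by
  have hrow : ∀ k ∈ Finset.range i, h (i + 1) k =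
      (1 / θseq N (i + 1)) * (2 * tseq k - ∑ j ∈ Finset.Ico (k + 1) (i + 1), h j k) := by
    intro k hk
    rw [hO2a i k (Finset.mem_range.mp hk) hiN,
      θseq_of_lt (i := k) (by have := Finset.mem_range.mp hk; omega)]
  rw [Finset.sum_range_succ, hO2b i hiN, θseq_of_lt (by omega), Finset.sum_congr rfl hrow,
    ← Finset.mul_sum, Finset.sum_sub_distrib, ← Finset.mul_sum, sum_range_sum_Ico_comm, hS,
    sum_range_tseq]
  have := (θseq_pos N (i + 1)).ne'
  field_simp
  ring

lemma sum_Icc_sum_range_ogm_of_lt {i : ℕ} (hi : i < N) :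
    ∑ j ∈ Finset.Icc 1 i, ∑ k ∈ Finset.range j, h j k = tseq i ^ 2 - 1 := by
  induction i with
  | zero => norm_num [tseq]
  | succ i ih =>
    have hS := ih (by omega)
    rw [Finset.sum_Icc_succ_top (by omega), hS, sum_range_ogm_succ hO2a hO2b hi.le hS,
      θseq_of_lt hi, ← tseq_succ_sq_sub]
    have := (tseq_pos (i + 1)).ne'
    field_simp
    ring

end OGM

/-- Double sums of the OGM coefficients: `∑_{j=1}^{i} ∑_{k<j} h_{j,k} = θ_i² - 1`
for `1 ≤ i ≤ N-1`, and `∑_{j=1}^{N} ∑_{k<j} h_{j,k} = (θ_N² - 1)/2`. -/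
theorem stmt_9 (N : ℕ) (hN : 1 ≤ N) (h : ℕ → ℕ → ℝ)
    (hO2a : ∀ i k, k < i → i + 1 ≤ N →
      h (i + 1) k = (1 / θseq N (i + 1)) *
        (2 * θseq N k - ∑ j ∈ Finset.Ico (k + 1) (i + 1), h j k))
    (hO2b : ∀ i, i + 1 ≤ N → h (i + 1) i = 1 + (2 * θseq N i - 1) / θseq N (i + 1)) :
    (∀ i, 1 ≤ i → i < N →
      ∑ j ∈ Finset.Icc 1 i, ∑ k ∈ Finset.range j, h j k = (θseq N i) ^ 2 - 1) ∧
    (∑ j ∈ Finset.Icc 1 N, ∑ k ∈ Finset.range j, h j k = ((θseq N N) ^ 2 - 1) / 2) := by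
  refine ⟨fun i _ hi => by
    rw [sum_Icc_sum_range_ogm_of_lt hO2a hO2b hi, θseq_of_lt hi], ?_⟩
  obtain ⟨M, rfl⟩ : ∃ M, N = M + 1 := ⟨N - 1, by omega⟩
  have hS := sum_Icc_sum_range_ogm_of_lt hO2a hO2b (Nat.lt_succ_self M)
  have hlast := θseq_self_sq_sub (M + 1)
  rw [Nat.add_sub_cancel] at hlast
  rw [Finset.sum_Icc_succ_top (by omega), hS, sum_range_ogm_succ hO2a hO2b le_rfl hS]
  have := (θseq_pos (M + 1) (M + 1)).ne'
  field_simp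
  linear_combination -(θseq (M + 1) (M + 1) + 1) * hlast
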